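/- If X follows the one-parameter Bell distribution with pmf P(X = n) = θⁿ Bₙ e^{1−e^θ}/n! (Bₙ the n-th Bell number, θ > 0), then E[X] = θe^θ and Var[X] = θe^θ(1+θ). -/

import Mathlib

/-!
Dobinski's formula makes the Bell law a Poisson mixture: expanding `Bₙ = e⁻¹ ∑ₖ kⁿ / k!` gives
`P(X = n) = ∑ₖ Po(eᶿ)(k) · Po(θk)(n)`, i.e. `X` is Poisson with random mean `θK`, `K ~ Po(eᶿ)`.
All terms being nonnegative, moments may be computed by conditioning on `K`:
`E[X] = θ E[K] = θeᶿ` and `E[X²] = θ² E[K²] + θ E[K] = θ²(e²ᶿ + eᶿ) + θeᶿ`.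
-/

/-- The `n`-th Bell number, via Dobinski's formula: the `n`-th moment of a
Poisson random variable with unit mean. -/
noncomputable def bellR (n : ℕ) : ℝ :=
  Real.exp (-1) * ∑' k : ℕ, (k : ℝ) ^ n / (Nat.factorial k)

open Nat Real

theorem hasSum_comm_of_nonneg {α β : Type*} {f : α → β → ℝ} (hf : ∀ a b, 0 ≤ f a b)
    {g : α → ℝ} {h : β → ℝ} {s : ℝ} (hg : ∀ a, HasSum (f a) (g a)) (hs : HasSum g s)
    (hh : ∀ b, HasSum (fun a => f a b) (h b)) : HasSum h s := by
  have hsum : Summable (fun p : α × β => f p.1 p.2) :=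
    (summable_prod_of_nonneg fun p => hf p.1 p.2).mpr
      ⟨fun a => (hg a).summable, hs.summable.congr fun a => ((hg a).tsum_eq).symm⟩
  have htot : HasSum (fun p : α × β => f p.1 p.2) s := by
    convert hsum.hasSum
    exact hs.unique (hsum.hasSum.prod_fiberwise hg)
  exact ((Equiv.prodComm β α).hasSum_iff.mpr htot).prod_fiberwise hh

theorem hasSum_sub_sq_mul {ι R : Type*} [CommRing R] [TopologicalSpace R] [IsTopologicalRing R]
    {p x : ι → R} {μ s : R} (h0 : HasSum p 1)
    (h1 : HasSum (fun i => x i * p i) μ) (h2 : HasSum (fun i => x i ^ 2 * p i) s) :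
    HasSum (fun i => (x i - μ) ^ 2 * p i) (s - μ ^ 2) := by
  rw [show s - μ ^ 2 = s - 2 * μ * μ + μ ^ 2 * 1 by ring]
  exact ((h2.sub (h1.mul_left (2 * μ))).add (h0.mul_left (μ ^ 2))).congr_fun fun i => by ring

theorem hasSum_pow_div_factorial (x : ℝ) : HasSum (fun n => x ^ n / n !) (exp x) :=
  exp_eq_exp_ℝ ▸ NormedSpace.expSeries_div_hasSum_exp x

theorem HasSum.natCast_mul_pow_div_factorial {p : ℕ → ℝ} {x s : ℝ}
    (h : HasSum (fun n => p (n + 1) * x ^ n / n !) s) :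
    HasSum (fun n => n * p n * x ^ n / n !) (x * s) := by
  refine (hasSum_nat_add_iff' 1).mp ?_
  simp only [Finset.range_one, Finset.sum_singleton, CharP.cast_eq_zero, zero_mul, zero_div,
    sub_zero]
  refine (h.mul_left x).congr_fun fun n => ?_
  push_cast [factorial_succ]
  field_simp
  ring

theorem hasSum_natCast_mul_pow_div_factorial (x : ℝ) :
    HasSum (fun n => n * x ^ n / n !) (x * exp x) := by
  have h : HasSum (fun n => 1 * x ^ n / n !) (exp x) :=
    (hasSum_pow_div_factorial x).congr_fun fun n => by ring
  exact (h.natCast_mul_pow_div_factorial (p := fun _ => 1)).congr_fun fun n => by ring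

theorem hasSum_natCast_sq_mul_pow_div_factorial (x : ℝ) :
    HasSum (fun n => n ^ 2 * x ^ n / n !) ((x ^ 2 + x) * exp x) := by
  have h : HasSum (fun n => ((n + 1 : ℕ) : ℝ) * x ^ n / n !) (x * exp x + exp x) :=
    ((hasSum_natCast_mul_pow_div_factorial x).add (hasSum_pow_div_factorial x)).congr_fun
      fun n => by push_cast; ring
  rw [show (x ^ 2 + x) * exp x = x * (x * exp x + exp x) by ring]
  exact h.natCast_mul_pow_div_factorial.congr_fun fun n => by ring

theorem summable_natCast_pow_div_factorial (n : ℕ) :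
    Summable (fun k : ℕ => (k : ℝ) ^ n / k !) := by
  refine (summable_pow_div_factorial ((2 : ℝ) ^ n)).of_nonneg_of_le (fun k => by positivity)
    fun k => ?_
  gcongr
  rw [← pow_mul, mul_comm, pow_mul]
  gcongr
  exact_mod_cast k.lt_two_pow_self.le

theorem exp_neg_mul_exp (x : ℝ) : exp (-x) * exp x = 1 := by
  rw [← exp_add, neg_add_cancel, exp_zero]

noncomputable def bellPMF (θ : ℝ) (n : ℕ) : ℝ :=
  θ ^ n * bellR n * exp (1 - exp θ) / n !

theorem hasSum_bellPMF_poisson_mixture (θ : ℝ) (n : ℕ) :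
    HasSum (fun k : ℕ => exp (-exp θ) / k ! * ((θ * k) ^ n / n !)) (bellPMF θ n) := by
  have h := (summable_natCast_pow_div_factorial n).hasSum.mul_left (exp (-exp θ) * θ ^ n / n !)
  rw [show bellPMF θ n = exp (-exp θ) * θ ^ n / n ! * ∑' k : ℕ, (k : ℝ) ^ n / (k !) by
    rw [bellPMF, bellR, sub_eq_add_neg, exp_add]
    linear_combination
      (exp (-exp θ) * θ ^ n * ∑' k : ℕ, (k : ℝ) ^ n / (k !)) / n ! * exp_neg_mul_exp 1]
  exact h.congr_fun fun k => by ring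

theorem hasSum_mul_bellPMF {θ : ℝ} (hθ : 0 ≤ θ) {w b : ℕ → ℝ} {s : ℝ} (hw : ∀ n, 0 ≤ w n)
    (hb : ∀ k : ℕ, HasSum (fun n => w n * (θ * k) ^ n / n !) (b k * exp (θ * k)))
    (hs : HasSum (fun k => b k * exp θ ^ k / k !) s) :
    HasSum (fun n => w n * bellPMF θ n) (exp (-exp θ) * s) := by
  have hrows : ∀ k : ℕ, HasSum (fun n => exp (-exp θ) / k ! * (w n * (θ * k) ^ n / n !))
      (exp (-exp θ) / k ! * (b k * exp (θ * k))) :=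
    fun k => (hb k).mul_left _
  have hcols : ∀ n, HasSum (fun k : ℕ => exp (-exp θ) / k ! * (w n * (θ * k) ^ n / n !))
      (w n * bellPMF θ n) :=
    fun n => ((hasSum_bellPMF_poisson_mixture θ n).mul_left (w n)).congr_fun fun k => by ring
  refine hasSum_comm_of_nonneg (fun k n => by have := hw n; positivity) hrows ?_ hcols
  exact (hs.mul_left (exp (-exp θ))).congr_fun fun k => by
    rw [← exp_nat_mul, mul_comm θ]
    ring

theorem hasSum_bellPMF {θ : ℝ} (hθ : 0 ≤ θ) : HasSum (bellPMF θ) 1 := by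
  have h := hasSum_mul_bellPMF hθ (w := fun _ => 1) (b := fun _ => 1)
    (fun _ => zero_le_one) (fun k => by simpa using hasSum_pow_div_factorial (θ * k))
    (by simpa using hasSum_pow_div_factorial (exp θ))
  rw [exp_neg_mul_exp] at h
  simpa using h

theorem hasSum_natCast_mul_bellPMF {θ : ℝ} (hθ : 0 ≤ θ) :
    HasSum (fun n : ℕ => (n : ℝ) * bellPMF θ n) (θ * exp θ) := by
  rw [show θ * exp θ = exp (-exp θ) * (θ * (exp θ * exp (exp θ))) by
    linear_combination (-θ * exp θ) * exp_neg_mul_exp (exp θ)]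
  exact hasSum_mul_bellPMF hθ (fun n => n.cast_nonneg)
    (fun k => (hasSum_natCast_mul_pow_div_factorial (θ * k)).congr_fun fun n => by ring)
    (((hasSum_natCast_mul_pow_div_factorial (exp θ)).mul_left θ).congr_fun fun k => by ring)

theorem hasSum_natCast_sq_mul_bellPMF {θ : ℝ} (hθ : 0 ≤ θ) :
    HasSum (fun n : ℕ => (n : ℝ) ^ 2 * bellPMF θ n)
      (θ ^ 2 * (exp θ ^ 2 + exp θ) + θ * exp θ) := by
  rw [show θ ^ 2 * (exp θ ^ 2 + exp θ) + θ * exp θ = exp (-exp θ) *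
      (θ ^ 2 * ((exp θ ^ 2 + exp θ) * exp (exp θ)) + θ * (exp θ * exp (exp θ))) by
    linear_combination (-(θ ^ 2 * (exp θ ^ 2 + exp θ) + θ * exp θ)) * exp_neg_mul_exp (exp θ)]
  exact hasSum_mul_bellPMF hθ (fun n => by positivity)
    (fun k => (hasSum_natCast_sq_mul_pow_div_factorial (θ * k)).congr_fun fun n => by ring)
    ((((hasSum_natCast_sq_mul_pow_div_factorial (exp θ)).mul_left (θ ^ 2)).add
      ((hasSum_natCast_mul_pow_div_factorial (exp θ)).mul_left θ)).congr_fun fun k => by ring)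

/-- Mean and variance of the one-parameter Bell distribution:
`E[X] = θeᶿ` and `Var[X] = θeᶿ(1+θ)`. -/
theorem bell_mean_variance (θ : ℝ) (hθ : 0 < θ) :
    HasSum (fun n : ℕ => (n : ℝ) *
        (θ ^ n * bellR n * Real.exp (1 - Real.exp θ) / (Nat.factorial n)))
      (θ * Real.exp θ) ∧
    HasSum (fun n : ℕ => ((n : ℝ) - θ * Real.exp θ) ^ 2 *
        (θ ^ n * bellR n * Real.exp (1 - Real.exp θ) / (Nat.factorial n)))
      (θ * Real.exp θ * (1 + θ)) := by
  refine ⟨hasSum_natCast_mul_bellPMF hθ.le, ?_⟩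
  rw [show θ * exp θ * (1 + θ) = θ ^ 2 * (exp θ ^ 2 + exp θ) + θ * exp θ - (θ * exp θ) ^ 2 by
    ring]
  exact hasSum_sub_sq_mul (hasSum_bellPMF hθ.le) (hasSum_natCast_mul_bellPMF hθ.le)
    (hasSum_natCast_sq_mul_bellPMF hθ.le)
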